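/- arXiv:2401.00970 — 2 statements merged into one kernel-verified Lean document; each statement's English description precedes it below -/
import Mathlib

section
/- Let γ ≠ 1/2, p ≠ 1/2 (with p = γπ*), c a real constant with c + 1 > 0. The function φ(z) = -c + ( ((1-2γ)/(1-2p))·(z^{1-2p} - 1)/(c+1)^{2γ} + (c+1)^{1-2γ} )^{1/(1-2γ)} satisfies φ(1) = 1, φ'(1) = 1, and the ODE φ''(z) = 2γ φ'(z)²/(c + φ(z)) - 2p·φ'(z)/z, on any interval around z = 1 where the expression inside the power is positive and c + φ(z) ≠ 0. -/
open Real

/-- The explicit candidate solution (A.6) of the shadow-price initial value problem. -/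
noncomputable def phiSol (γ p c : ℝ) (z : ℝ) : ℝ :=
  -c + (((1 - 2 * γ) / (1 - 2 * p)) * (z ^ ((1 : ℝ) - 2 * p) - 1) / (c + 1) ^ (2 * γ)
      + (c + 1) ^ ((1 : ℝ) - 2 * γ)) ^ ((1 : ℝ) / (1 - 2 * γ))

noncomputable def Bfun (γ p c z : ℝ) : ℝ :=
  ((1 - 2 * γ) / (1 - 2 * p)) * (z ^ ((1 : ℝ) - 2 * p) - 1) / (c + 1) ^ (2 * γ)
      + (c + 1) ^ ((1 : ℝ) - 2 * γ)

lemma hasDerivAt_Bfun (γ p c z : ℝ) (hp : p ≠ 1 / 2) (hz : 0 < z) :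
    HasDerivAt (Bfun γ p c)
      ((1 - 2 * γ) * z ^ (-(2 * p)) / (c + 1) ^ (2 * γ)) z := by
  have hp' : (1 : ℝ) - 2 * p ≠ 0 := by
    intro h; apply hp; linarith [h]
  have h1 : HasDerivAt (fun z : ℝ => z ^ ((1 : ℝ) - 2 * p))
      ((1 - 2 * p) * z ^ ((1 : ℝ) - 2 * p - 1)) z :=
    Real.hasDerivAt_rpow_const (Or.inl hz.ne')
  have h2 := (((h1.sub_const 1).const_mul ((1 - 2 * γ) / (1 - 2 * p))).div_const
      ((c + 1) ^ (2 * γ))).add_const ((c + 1) ^ ((1 : ℝ) - 2 * γ))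
  refine HasDerivAt.congr_deriv h2 ?_
  rw [show (1 : ℝ) - 2 * p - 1 = -(2 * p) by ring]
  congr 1
  field_simp

lemma hasDerivAt_phiSol (γ p c z : ℝ) (hγ : γ ≠ 1 / 2) (hp : p ≠ 1 / 2)
    (hz : 0 < z) (hb : 0 < Bfun γ p c z) :
    HasDerivAt (phiSol γ p c)
      ((Bfun γ p c z) ^ ((1 : ℝ) / (1 - 2 * γ) - 1) * z ^ (-(2 * p)) / (c + 1) ^ (2 * γ)) z := by
  have hγ' : (1 : ℝ) - 2 * γ ≠ 0 := by intro h; apply hγ; linarith [h]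
  have h := ((hasDerivAt_Bfun γ p c z hp hz).rpow_const
      (p := (1 : ℝ) / (1 - 2 * γ)) (Or.inl hb.ne')).const_add (-c)
  refine HasDerivAt.congr_deriv h ?_
  rw [show (1 - 2 * γ) * z ^ (-(2 * p)) / (c + 1) ^ (2 * γ) * ((1:ℝ) / (1 - 2 * γ)) *
      Bfun γ p c z ^ ((1:ℝ) / (1 - 2 * γ) - 1)
    = ((1 - 2 * γ) * ((1:ℝ) / (1 - 2 * γ))) *
      (Bfun γ p c z ^ ((1:ℝ) / (1 - 2 * γ) - 1) * z ^ (-(2 * p)) / (c + 1) ^ (2 * γ)) by ring,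
    mul_one_div, div_self hγ', one_mul]

lemma alg_key (γ p k u b v z : ℝ) (hγ' : (1:ℝ) - 2 * γ ≠ 0) (hk : k ≠ 0) (hu : u ≠ 0)
    (hb : b ≠ 0) (hz : z ≠ 0) :
    ((1 - 2 * γ) * v / k * ((1:ℝ) / (1 - 2 * γ) - 1) * u * v + u * b * (-(2 * p) * (v / z))) / k
      = 2 * γ * (u * b * v / k) ^ 2 / (u * (b * b)) - 2 * p * (u * b * v / k) / z := by
  field_simp
  ring

/-- The explicit function `φ` satisfies `φ(1) = 1`, `φ'(1) = 1`, and the ODE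
`φ'' = 2γ(φ')²/(c+φ) - 2p·φ'/z` on any open interval around `1` in `(0,∞)` where the
base of the outer power is positive and `c + φ ≠ 0`. -/
theorem phiSol_solves_ivp (γ p c : ℝ) (hγ : γ ≠ 1 / 2) (hp : p ≠ 1 / 2)
    (hc : 0 < c + 1) (I : Set ℝ) (hI : IsOpen I) (hI1 : (1 : ℝ) ∈ I)
    (hIpos : ∀ z ∈ I, 0 < z)
    (hbase : ∀ z ∈ I,
      0 < ((1 - 2 * γ) / (1 - 2 * p)) * (z ^ ((1 : ℝ) - 2 * p) - 1) / (c + 1) ^ (2 * γ)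
          + (c + 1) ^ ((1 : ℝ) - 2 * γ))
    (hne : ∀ z ∈ I, c + phiSol γ p c z ≠ 0) :
    phiSol γ p c 1 = 1 ∧ deriv (phiSol γ p c) 1 = 1 ∧
    ∀ z ∈ I, deriv (deriv (phiSol γ p c)) z =
      2 * γ * (deriv (phiSol γ p c) z) ^ 2 / (c + phiSol γ p c z)
        - 2 * p * deriv (phiSol γ p c) z / z := by
  have hγ' : (1 : ℝ) - 2 * γ ≠ 0 := by intro h; apply hγ; linarith [h]
  have hbase' : ∀ z ∈ I, 0 < Bfun γ p c z := hbase
  have hk : (0 : ℝ) < (c + 1) ^ (2 * γ) := Real.rpow_pos_of_pos hc _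
  have hB1 : Bfun γ p c 1 = (c + 1) ^ ((1 : ℝ) - 2 * γ) := by
    simp [Bfun]
  have hval1 : phiSol γ p c 1 = 1 := by
    have h : ((c + 1) ^ ((1 : ℝ) - 2 * γ)) ^ ((1 : ℝ) / (1 - 2 * γ)) = c + 1 := by
      rw [← Real.rpow_mul hc.le, mul_one_div, div_self hγ', Real.rpow_one]
    simp only [phiSol]
    rw [show ((1 - 2 * γ) / (1 - 2 * p)) * ((1:ℝ) ^ ((1 : ℝ) - 2 * p) - 1) / (c + 1) ^ (2 * γ)
      + (c + 1) ^ ((1 : ℝ) - 2 * γ) = (c + 1) ^ ((1 : ℝ) - 2 * γ) by simp, h]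
    ring
  refine ⟨hval1, ?_, ?_⟩
  · have h := hasDerivAt_phiSol γ p c 1 hγ hp one_pos (by rw [hB1]; positivity)
    rw [h.deriv, hB1, ← Real.rpow_mul hc.le,
      show ((1:ℝ) - 2*γ) * ((1:ℝ)/(1-2*γ) - 1) = 2*γ by
        rw [mul_sub, mul_one_div, div_self hγ']; ring]
    rw [Real.one_rpow, mul_one, div_self hk.ne']
  · intro z hz
    have hderiv : ∀ w ∈ I, deriv (phiSol γ p c) w =
        (Bfun γ p c w) ^ ((1 : ℝ) / (1 - 2 * γ) - 1) * w ^ (-(2 * p)) / (c + 1) ^ (2 * γ) :=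
      fun w hw => (hasDerivAt_phiSol γ p c w hγ hp (hIpos w hw) (hbase' w hw)).deriv
    have heq : deriv (phiSol γ p c) =ᶠ[nhds z] fun w =>
        (Bfun γ p c w) ^ ((1 : ℝ) / (1 - 2 * γ) - 1) * w ^ (-(2 * p)) / (c + 1) ^ (2 * γ) :=
      Filter.eventually_iff_exists_mem.2 ⟨I, hI.mem_nhds hz, hderiv⟩
    rw [heq.deriv_eq, hderiv z hz]
    have hzpos := hIpos z hz
    have hb := hbase' z hz
    have hbne := hb.ne'
    have h1 : HasDerivAt (fun w => (Bfun γ p c w) ^ ((1 : ℝ) / (1 - 2 * γ) - 1))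
        ((1 - 2 * γ) * z ^ (-(2 * p)) / (c + 1) ^ (2 * γ) * ((1 : ℝ) / (1 - 2 * γ) - 1) *
          (Bfun γ p c z) ^ ((1 : ℝ) / (1 - 2 * γ) - 1 - 1)) z :=
      (hasDerivAt_Bfun γ p c z hp hzpos).rpow_const (Or.inl hbne)
    have h2 : HasDerivAt (fun w : ℝ => w ^ (-(2 * p)))
        ((-(2 * p)) * z ^ (-(2 * p) - 1)) z :=
      Real.hasDerivAt_rpow_const (Or.inl hzpos.ne')
    have hFd := (h1.mul h2).div_const ((c + 1) ^ (2 * γ))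
    rw [HasDerivAt.deriv (f := fun w => (Bfun γ p c w) ^ ((1 : ℝ) / (1 - 2 * γ) - 1) * w ^ (-(2 * p)) / (c + 1) ^ (2 * γ)) hFd]
    have hcphi : c + phiSol γ p c z = (Bfun γ p c z) ^ ((1 : ℝ) / (1 - 2 * γ)) := by
      simp only [phiSol, Bfun]; ring
    rw [hcphi]
    have e1 : (Bfun γ p c z) ^ ((1 : ℝ) / (1 - 2 * γ) - 1)
        = (Bfun γ p c z) ^ ((1 : ℝ) / (1 - 2 * γ) - 1 - 1) * Bfun γ p c z := by
      have h := Real.rpow_add hb ((1 : ℝ) / (1 - 2 * γ) - 1 - 1) 1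
      rw [Real.rpow_one, show (1 : ℝ) / (1 - 2 * γ) - 1 - 1 + 1 = (1 : ℝ) / (1 - 2 * γ) - 1
        by ring] at h
      exact h
    have e2 : (Bfun γ p c z) ^ ((1 : ℝ) / (1 - 2 * γ))
        = (Bfun γ p c z) ^ ((1 : ℝ) / (1 - 2 * γ) - 1 - 1) * (Bfun γ p c z * Bfun γ p c z) := by
      have h := Real.rpow_add hb ((1 : ℝ) / (1 - 2 * γ) - 1 - 1) 2
      rw [show (1 : ℝ) / (1 - 2 * γ) - 1 - 1 + 2 = (1 : ℝ) / (1 - 2 * γ) by ring,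
        Real.rpow_two] at h
      rw [h]; ring
    have e3 : z ^ (-(2 * p) - 1) = z ^ (-(2 * p)) / z := by
      rw [show -(2 * p) - 1 = -(2 * p) + (-1) by ring, Real.rpow_add hzpos,
        Real.rpow_neg_one, div_eq_mul_inv]
    have hu : (Bfun γ p c z) ^ ((1 : ℝ) / (1 - 2 * γ) - 1 - 1) ≠ 0 :=
      (Real.rpow_pos_of_pos hb _).ne'
    rw [e1, e2, e3]
    exact alg_key γ p ((c + 1) ^ (2 * γ)) _ (Bfun γ p c z) (z ^ (-(2 * p))) z
      hγ' hk.ne' hu hbne hzpos.ne'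
end

section
/- Fix 0 < ε < 1, γ ≠ 1/2, p = γπ* ≠ 1/2, and s > 0, c with c+1 > 0 and c + (1-ε)s > 0. Suppose φ is the explicit solution of the initial value problem φ'' = 2γ(φ')²/(c+φ) - 2p φ'/z, φ(1) = 1, φ'(1) = 1 (given by the closed formula in Lemma A.1 of the paper). Then the boundary conditions φ(s) = (1-ε)s and φ'(s) = 1-ε hold if and only if both: (i) ((c+(1-ε)s)/(c+1))^{1-2γ} - 1 = ((1-2γ)/(1-2p))·(s^{1-2p}-1)/(c+1), and (ii) (1-ε)^{1/(2γ)}·s^{p/γ} = (c+(1-ε)s)/(c+1). -/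
private lemma rpow_left_inj' {x y : ℝ} (hx : 0 < x) (hy : 0 < y) {e : ℝ} (he : e ≠ 0) :
    x ^ e = y ^ e ↔ x = y := by
  constructor
  · intro h
    have h2 : (x ^ e) ^ (1 / e) = (y ^ e) ^ (1 / e) := by rw [h]
    rwa [← Real.rpow_mul hx.le, ← Real.rpow_mul hy.le, mul_one_div_cancel he,
      Real.rpow_one, Real.rpow_one] at h2
  · rintro rfl; rfl

/-- Lemma A.1: for the explicit solution of the initial value problem, the terminal
boundary conditions `φ(s) = (1-ε)s`, `φ'(s) = 1-ε` hold if and only if `(c, s)` satisfies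
the nonlinear system (A.9)-(A.10). -/
theorem boundary_conditions_iff (γ p ε c s : ℝ)
    (hγ0 : γ ≠ 0) (hγ : γ ≠ 1 / 2) (hp : p ≠ 1 / 2)
    (hε0 : 0 < ε) (hε1 : ε < 1) (hs : 0 < s)
    (hc : 0 < c + 1) (hcs : 0 < c + (1 - ε) * s)
    (hbase : 0 < ((1 - 2 * γ) / (1 - 2 * p)) * (s ^ ((1 : ℝ) - 2 * p) - 1) / (c + 1) ^ (2 * γ)
        + (c + 1) ^ ((1 : ℝ) - 2 * γ)) :
    (phiSol γ p c s = (1 - ε) * s ∧ deriv (phiSol γ p c) s = 1 - ε) ↔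
    (((c + (1 - ε) * s) / (c + 1)) ^ ((1 : ℝ) - 2 * γ) - 1 =
        ((1 - 2 * γ) / (1 - 2 * p)) * (s ^ ((1 : ℝ) - 2 * p) - 1) / (c + 1) ∧
      (1 - ε) ^ ((1 : ℝ) / (2 * γ)) * s ^ (p / γ) = (c + (1 - ε) * s) / (c + 1)) := by
  have hγ2 : (1 : ℝ) - 2 * γ ≠ 0 := by
    intro h; apply hγ; linarith
  have hp2 : (1 : ℝ) - 2 * p ≠ 0 := by
    intro h; apply hp; linarith
  set K : ℝ := (1 - 2 * γ) / (1 - 2 * p) with hK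
  set a : ℝ := (1 : ℝ) - 2 * p with ha
  set e : ℝ := (1 : ℝ) / (1 - 2 * γ) with he
  set D : ℝ := (c + 1) ^ (2 * γ) with hD
  set E : ℝ := (c + 1) ^ ((1 : ℝ) - 2 * γ) with hE
  set T : ℝ := c + (1 - ε) * s with hT
  have hDpos : 0 < D := Real.rpow_pos_of_pos hc _
  have hEpos : 0 < E := Real.rpow_pos_of_pos hc _
  have hTpos : 0 < T := hcs
  set B : ℝ → ℝ := fun z : ℝ => K * (z ^ a - 1) / D + E with hBdef
  have hBpos : 0 < B s := hbase
  have hED : E * D = c + 1 := by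
    rw [hE, hD, ← Real.rpow_add hc]; norm_num
  have hval : phiSol γ p c s = -c + (B s) ^ e := rfl
  -- derivative of phiSol at s
  have hderivB : HasDerivAt B (K * (a * s ^ (a - 1)) / D) s := by
    have h1 : HasDerivAt (fun z : ℝ => z ^ a) (a * s ^ (a - 1)) s :=
      Real.hasDerivAt_rpow_const (Or.inl hs.ne')
    exact (((h1.sub_const 1).const_mul K).div_const D).add_const E
  have hderivPhi : HasDerivAt (phiSol γ p c)
      ((K * (a * s ^ (a - 1)) / D) * e * (B s) ^ (e - 1)) s := by
    have h2 := (hderivB.rpow_const (p := e) (Or.inl hBpos.ne')).const_add (-c)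
    exact h2
  have hderiv : deriv (phiSol γ p c) s = s ^ (-(2 * p)) * (B s) ^ (e - 1) / D := by
    rw [hderivPhi.deriv]
    have ha1 : a - 1 = -(2 * p) := by rw [ha]; ring
    rw [ha1, hK, he]
    field_simp
  -- first boundary condition
  have hiff1 : phiSol γ p c s = (1 - ε) * s ↔ B s = T ^ ((1 : ℝ) - 2 * γ) := by
    rw [hval]
    constructor
    · intro h
      have hBe : (B s) ^ e = T := by rw [hT]; linarith
      have h3 : ((B s) ^ e) ^ ((1 : ℝ) - 2 * γ) = T ^ ((1 : ℝ) - 2 * γ) := by rw [hBe]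
      have h4 : e * ((1 : ℝ) - 2 * γ) = 1 := by rw [he]; field_simp
      rwa [← Real.rpow_mul hBpos.le, h4, Real.rpow_one] at h3
    · intro h
      have h4 : ((1 : ℝ) - 2 * γ) * e = 1 := by rw [he]; field_simp
      rw [h, ← Real.rpow_mul hTpos.le, h4, Real.rpow_one, hT]; ring
  have hdivpow : (T / (c + 1)) ^ ((1 : ℝ) - 2 * γ) = T ^ ((1 : ℝ) - 2 * γ) / E := by
    rw [Real.div_rpow hTpos.le hc.le, hE]
  have hkey : (K * (s ^ a - 1) / (c + 1) + 1) * E = K * (s ^ a - 1) / D + E := by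
    field_simp
    linear_combination (K * (s ^ a - 1)) * hED
  have hiff2 : B s = T ^ ((1 : ℝ) - 2 * γ) ↔
      (T / (c + 1)) ^ ((1 : ℝ) - 2 * γ) - 1 = K * (s ^ a - 1) / (c + 1) := by
    rw [hdivpow, sub_eq_iff_eq_add, div_eq_iff hEpos.ne', hkey]
    exact eq_comm
  -- second boundary condition, given the first
  have hiff3 : ∀ _ : B s = T ^ ((1 : ℝ) - 2 * γ),
      (deriv (phiSol γ p c) s = 1 - ε ↔
        (1 - ε) ^ ((1 : ℝ) / (2 * γ)) * s ^ (p / γ) = T / (c + 1)) := by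
    intro h1
    have hBe1 : (B s) ^ (e - 1) = T ^ (2 * γ) := by
      rw [h1, ← Real.rpow_mul hTpos.le]
      congr 1
      rw [he]; field_simp; ring
    have hεpos : (0 : ℝ) < 1 - ε := by linarith
    have hPpos : 0 < (1 - ε) ^ ((1 : ℝ) / (2 * γ)) * s ^ (p / γ) :=
      mul_pos (Real.rpow_pos_of_pos hεpos _) (Real.rpow_pos_of_pos hs _)
    have hQpos : 0 < T / (c + 1) := div_pos hTpos hc
    have h2γ : (2 : ℝ) * γ ≠ 0 := by
      intro h; apply hγ0; linarith
    have hP : ((1 - ε) ^ ((1 : ℝ) / (2 * γ)) * s ^ (p / γ)) ^ (2 * γ)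
        = (1 - ε) * s ^ (2 * p) := by
      rw [Real.mul_rpow (Real.rpow_pos_of_pos hεpos _).le (Real.rpow_pos_of_pos hs _).le,
        ← Real.rpow_mul hεpos.le, ← Real.rpow_mul hs.le, one_div_mul_cancel h2γ,
        Real.rpow_one]
      congr 2
      field_simp
    have hQ : (T / (c + 1)) ^ (2 * γ) = T ^ (2 * γ) / D := by
      rw [Real.div_rpow hTpos.le hc.le, hD]
    rw [hderiv, hBe1, ← rpow_left_inj' hPpos hQpos h2γ, hP, hQ,
      Real.rpow_neg hs.le]
    have hspos : 0 < s ^ (2 * p) := Real.rpow_pos_of_pos hs _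
    constructor
    · intro h
      field_simp at h ⊢
      linear_combination -h
    · intro h
      field_simp at h ⊢
      linear_combination -h
  constructor
  · rintro ⟨h1', h2'⟩
    have h1 := hiff1.mp h1'
    exact ⟨hiff2.mp h1, (hiff3 h1).mp h2'⟩
  · rintro ⟨h1', h2'⟩
    have h1 := hiff2.mpr h1'
    exact ⟨hiff1.mpr h1, (hiff3 h1).mpr h2'⟩
end
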